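/- arXiv:1909.07656 — 3 statements merged into one kernel-verified Lean document; each statement's English description precedes it below -/
import Mathlib

section
/- (ℕ_B^∞, min, ∞, +_B, 0) is a commutative semiring; its induced relation x ⊑ y (defined by: there exists z with min x z = y) coincides with y ≤ x; and it satisfies Assumption 1 of the paper: (ℕ_B^∞, ⊑) is a complete lattice with ⊑-bottom ∞ and ⊑-top 0, and both min and +_B preserve suprema of ⊑-increasing ω-chains and infima of ⊑-decreasing ω-chains in each argument. -/
/-! Writing `cap B x = if x ≤ B then x else ∞` on `ℕ∞`, capped addition is `cap B (m + n)`.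
Since `+` is increasing, an inner cap is absorbed by an outer one,
`cap B (cap B s + c) = cap B (s + c)`, which gives associativity; `+_B` is monotone, hence
distributes over `min`. Everything else holds because `ℕ_B^∞` is a finite linear order: it is a
complete lattice, and the infimum (supremum) of a sequence is one of its terms, so every monotone
map preserves it. -/

/-- The carrier `ℕ_B^∞ = {0, 1, …, B} ∪ {∞}` as a subtype of `ℕ∞`, with the inherited
order. -/
abbrev NB (B : ℕ) : Type := {n : ℕ∞ // n ≤ (B : ℕ∞) ∨ n = ⊤}

/-- The element `∞` of `ℕ_B^∞` (the additive unit, i.e. the semiring zero). -/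
def NB.infty (B : ℕ) : NB B := ⟨⊤, Or.inr rfl⟩

/-- The element `0` of `ℕ_B^∞` (the multiplicative unit, i.e. the semiring one). -/
def NB.zero (B : ℕ) : NB B := ⟨0, Or.inl zero_le⟩

/-- Capped addition `m +_B n` on `ℕ_B^∞` (the semiring multiplication). -/
def NB.add (B : ℕ) (m n : NB B) : NB B :=
  if h : m.1 + n.1 ≤ (B : ℕ∞) then ⟨m.1 + n.1, Or.inl h⟩ else ⟨⊤, Or.inr rfl⟩

theorem exists_min_eq_iff_le {α : Type*} [LinearOrder α] {x y : α} :
    (∃ z, min x z = y) ↔ y ≤ x :=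
  ⟨fun ⟨z, hz⟩ => hz ▸ min_le_left x z, fun h => ⟨y, min_eq_right h⟩⟩

theorem Finite.exists_isLUB {α : Type*} [Lattice α] [Finite α] [Nonempty α] (s : Set α) :
    ∃ b, IsLUB s b := by
  have := Fintype.ofFinite α
  let := Fintype.toCompleteLatticeOfNonempty α
  exact ⟨sSup s, isLUB_sSup s⟩

theorem Finite.exists_isGLB {α : Type*} [Lattice α] [Finite α] [Nonempty α] (s : Set α) :
    ∃ b, IsGLB s b :=
  Finite.exists_isLUB (α := αᵒᵈ) s

theorem IsGLB.mem_of_finite {α : Type*} [LinearOrder α] {s : Set α} {b : α} (hb : IsGLB s b)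
    (hs : s.Finite) (hne : s.Nonempty) : b ∈ s := by
  simpa using Finset.isGLB_mem hs.toFinset (by simpa using hb) (by simpa using hne)

theorem Monotone.map_isGLB_of_finite {α β : Type*} [LinearOrder α] [Preorder β] {f : α → β}
    (hf : Monotone f) {s : Set α} {b : α} (hb : IsGLB s b) (hs : s.Finite) (hne : s.Nonempty) :
    IsGLB (f '' s) (f b) :=
  (hf.map_isLeast ⟨hb.mem_of_finite hs hne, hb.1⟩).isGLB

theorem Monotone.map_isGLB_range {α β : Type*} [LinearOrder α] [Finite α] [Preorder β]
    {f : α → β} (hf : Monotone f) {a : ℕ → α} {b : α} (hb : IsGLB (Set.range a) b) :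
    IsGLB (Set.range fun i => f (a i)) (f b) := by
  simpa only [Set.range_comp'] using
    hf.map_isGLB_of_finite hb (Set.toFinite _) (Set.range_nonempty a)

theorem Monotone.map_isLUB_range {α β : Type*} [LinearOrder α] [Finite α] [Preorder β]
    {f : α → β} (hf : Monotone f) {a : ℕ → α} {b : α} (hb : IsLUB (Set.range a) b) :
    IsLUB (Set.range fun i => f (a i)) (f b) :=
  hf.dual.map_isGLB_range (α := αᵒᵈ) (β := βᵒᵈ) hb

namespace NB

variable {B : ℕ}

def cap (B : ℕ) (x : ℕ∞) : ℕ∞ := if x ≤ B then x else ⊤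

lemma cap_mono : Monotone (cap B) := by
  intro x y h
  by_cases hy : y ≤ B
  · simp only [cap, if_pos hy, if_pos (h.trans hy), h]
  · simp only [cap, if_neg hy, le_top]

lemma cap_val (x : NB B) : cap B x.1 = x.1 := by
  rcases x.2 with h | h
  · rw [cap, if_pos h]
  · simp [cap, h]

lemma cap_cap_add (s c : ℕ∞) : cap B (cap B s + c) = cap B (s + c) := by
  by_cases h : s ≤ B
  · rw [show cap B s = s from if_pos h]
  · have h' : ¬ s + c ≤ B := fun hsc => h (le_self_add.trans hsc)
    simp [cap, h, h']

lemma cap_add_cap (c s : ℕ∞) : cap B (c + cap B s) = cap B (c + s) := by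
  rw [add_comm c, add_comm c, cap_cap_add]

lemma val_add (m n : NB B) : (NB.add B m n).1 = cap B (m.1 + n.1) := by
  unfold NB.add cap
  split_ifs <;> rfl

lemma add_assoc (a b c : NB B) : NB.add B (NB.add B a b) c = NB.add B a (NB.add B b c) := by
  apply Subtype.ext
  simp only [val_add, cap_cap_add, cap_add_cap, _root_.add_assoc]

lemma add_comm (a b : NB B) : NB.add B a b = NB.add B b a :=
  Subtype.ext <| by simp only [val_add, _root_.add_comm]

lemma zero_add (a : NB B) : NB.add B (NB.zero B) a = a :=
  Subtype.ext <| by simp only [val_add, NB.zero, _root_.zero_add, cap_val]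

lemma infty_add (a : NB B) : NB.add B (NB.infty B) a = NB.infty B :=
  Subtype.ext <| by simp [val_add, NB.infty, cap]

lemma add_mono_left (c : NB B) : Monotone fun x => NB.add B x c := fun _ _ h => by
  simp only [← Subtype.coe_le_coe, val_add]
  exact cap_mono (add_le_add_left (Subtype.coe_le_coe.mpr h) _)

lemma add_mono_right (a : NB B) : Monotone (NB.add B a) := fun x y h => by
  simpa only [add_comm a] using add_mono_left a h

lemma le_infty (x : NB B) : x ≤ NB.infty B :=
  Subtype.coe_le_coe.mp le_top

lemma zero_le (x : NB B) : NB.zero B ≤ x :=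
  Subtype.coe_le_coe.mp bot_le

instance : Nonempty (NB B) := ⟨NB.zero B⟩

instance : Finite (NB B) := by
  refine Set.Finite.to_subtype <|
    (((Set.finite_Iic B).image ((↑) : ℕ → ℕ∞)).insert ⊤).subset ?_
  rintro n (h | rfl)
  · lift n to ℕ using (h.trans_lt (ENat.natCast_lt_top B)).ne
    exact Or.inr ⟨n, by simpa using h, rfl⟩
  · exact Set.mem_insert _ _

end NB

/-- `(ℕ_B^∞, min, ∞, +_B, 0)` is a commutative semiring; its induced
relation `x ⊑ y ↔ ∃ z, min x z = y` coincides with `y ≤ x`; and Assumption 1 holds: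
`(ℕ_B^∞, ⊑)` is a complete lattice (every subset has a `≤`-LUB and a `≤`-GLB) with
`⊑`-bottom `∞` and `⊑`-top `0`, and both `min` and `+_B` preserve suprema of
`⊑`-increasing (`≤`-antitone) ω-chains (which are `≤`-GLBs) and infima of
`⊑`-decreasing (`≤`-monotone) ω-chains (which are `≤`-LUBs), in each argument. -/
theorem stmt6 (B : ℕ) :
    -- commutative semiring axioms (addition `min` with unit `∞`,
    -- multiplication `+_B` with unit `0`):
    (∀ a b c : NB B, min (min a b) c = min a (min b c)) ∧
    (∀ a b : NB B, min a b = min b a) ∧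
    (∀ a : NB B, min (NB.infty B) a = a) ∧
    (∀ a b c : NB B, NB.add B (NB.add B a b) c = NB.add B a (NB.add B b c)) ∧
    (∀ a b : NB B, NB.add B a b = NB.add B b a) ∧
    (∀ a : NB B, NB.add B (NB.zero B) a = a) ∧
    (∀ a : NB B, NB.add B (NB.infty B) a = NB.infty B) ∧
    (∀ a b c : NB B, NB.add B a (min b c) = min (NB.add B a b) (NB.add B a c)) ∧
    -- the induced relation `⊑` coincides with `≥`:
    (∀ x y : NB B, (∃ z, min x z = y) ↔ y ≤ x) ∧
    -- complete lattice: every subset has a least upper bound and a greatest lower bound: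
    (∀ A : Set (NB B), (∃ b, IsLUB A b) ∧ (∃ b, IsGLB A b)) ∧
    -- `⊑`-bottom `∞` and `⊑`-top `0`:
    (∀ x : NB B, x ≤ NB.infty B) ∧
    (∀ x : NB B, NB.zero B ≤ x) ∧
    -- `min` and `+_B` preserve `⊑`-suprema of `⊑`-increasing ω-chains:
    (∀ (c : NB B) (a : ℕ → NB B), Antitone a → ∀ b, IsGLB (Set.range a) b →
      IsGLB (Set.range fun i => NB.add B (a i) c) (NB.add B b c) ∧
      IsGLB (Set.range fun i => min (a i) c) (min b c)) ∧
    -- `min` and `+_B` preserve `⊑`-infima of `⊑`-decreasing ω-chains: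
    (∀ (c : NB B) (a : ℕ → NB B), Monotone a → ∀ b, IsLUB (Set.range a) b →
      IsLUB (Set.range fun i => NB.add B (a i) c) (NB.add B b c) ∧
      IsLUB (Set.range fun i => min (a i) c) (min b c)) := by
  exact ⟨min_assoc, min_comm, fun a => min_eq_right (NB.le_infty a), NB.add_assoc, NB.add_comm,
    NB.zero_add, NB.infty_add, fun a _ _ => (NB.add_mono_right a).map_min,
    fun _ _ => exists_min_eq_iff_le,
    fun A => ⟨Finite.exists_isLUB A, Finite.exists_isGLB A⟩, NB.le_infty, NB.zero_le,
    fun c _ _ _ hb => ⟨(NB.add_mono_left c).map_isGLB_range hb,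
      (monotone_id.min monotone_const).map_isGLB_range hb⟩,
    fun c _ _ _ hb => ⟨(NB.add_mono_left c).map_isLUB_range hb,
      (monotone_id.min monotone_const).map_isLUB_range hb⟩⟩
end

section
/- If z₀ is an accepting run from q₀ of a resource-aware Büchi word automaton, then ext q₀ ≤ val z₀ (in (ℕ∞, ≤)): the extent of the initial state is a lower bound on the minimal initial resources required by any accepting run from that state. -/
/-!
Let `u⋆ q` be the infimum of `val z` over the accepting sequences `z` starting at an accepting
state `q`. Along an accepting sequence, the inner greatest fixpoint can be unfolded one step at
a time until the first accepting state is reached, each unfolding being matched by one unfolding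
of `val = Φ val`; at that accepting state `u⋆` bounds `val` by definition. Applied after the
first step of a sequence from an accepting state, this makes `u⋆` a prefixed point of the outer
operator. That operator is monotone because a greatest fixpoint depends monotonically on its
parameter, so `e₂ ≤ u⋆`, and the same unfolding along `z₀` gives `ext q₀ ≤ val z₀`.
-/

/-- Capped subtraction on `ℕ∞`: `n ⊖ m = ∞` if both `n = ∞` and `m = ∞`, and
`n ⊖ m = n - m` (truncated subtraction) otherwise. -/
def csub (n m : ℕ∞) : ℕ∞ := if n = ⊤ ∧ m = ⊤ then ⊤ else n - m

/-- The operator whose `≤`-least fixpoint (in the pointwise order) is the value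
function `val`: `Φ v z = (γ (z 0) (z 1) + v (fun n => z (n+1))) ⊖ r (z 0)`. -/
def Phi {Q : Type*} (γ : Q → Q → ℕ∞) (r : Q → ℕ∞) (v : (ℕ → Q) → ℕ∞) :
    (ℕ → Q) → ℕ∞ :=
  fun z => csub (γ (z 0) (z 1) + v (fun n => z (n + 1))) (r (z 0))

/-- A run from `q₀`: a sequence of states starting at `q₀` all of whose steps are
actual transitions (finite weight). -/
def IsRun {Q : Type*} (γ : Q → Q → ℕ∞) (q₀ : Q) (z : ℕ → Q) : Prop :=
  z 0 = q₀ ∧ ∀ n, γ (z n) (z (n + 1)) ≠ ⊤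

/-- A run is accepting iff it visits parity-2 (accepting) states infinitely often. -/
def Accepting {Q : Type*} (Ω : Q → ℕ) (z : ℕ → Q) : Prop :=
  ∀ N, ∃ n, N ≤ n ∧ Ω (z n) = 2

/-- One step of the extent system: `q ↦ (⨅ q', (γ q q' + u q')) ⊖ r q`. -/
noncomputable def extStep {Q : Type*} (γ : Q → Q → ℕ∞) (r : Q → ℕ∞) (u : Q → ℕ∞) (q : Q) : ℕ∞ :=
  csub (⨅ q' : Q, (γ q q' + u q')) (r q)

/-- The copairing `[u₁, u₂] : Q → ℕ∞` of `u₁ : Q₁ → ℕ∞` and `u₂ : Q₂ → ℕ∞`. -/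
def copair {Q : Type*} (Ω : Q → ℕ) (hΩ : ∀ q, Ω q = 1 ∨ Ω q = 2)
    (u₁ : {q // Ω q = 1} → ℕ∞) (u₂ : {q // Ω q = 2} → ℕ∞) (q : Q) : ℕ∞ :=
  if h : Ω q = 2 then u₂ ⟨q, h⟩ else u₁ ⟨q, (hΩ q).resolve_right h⟩

open Function

theorem monotone_of_isGreatest_fixedPoints {α β : Type*} [Preorder β] [CompleteLattice α]
    {G : β → α → α} (hG : Monotone G) (hGb : ∀ b, Monotone (G b)) {g : β → α}
    (hg : ∀ b, IsGreatest (fixedPoints (G b)) (g b)) : Monotone g := by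
  intro b b' hb
  have hpost : g b ≤ G b' (g b) := calc
    g b = G b (g b) := (hg b).1.symm
    _ ≤ G b' (g b) := hG hb _
  exact ((OrderHom.le_gfp ⟨G b', hGb b'⟩ hpost).trans
    ((hg b').2 (OrderHom.map_gfp ⟨G b', hGb b'⟩)))

theorem le_of_mem_lowerBounds_fixedPoints {α : Type*} [CompleteLattice α] {f : α → α}
    (hf : Monotone f) {e x : α} (he : e ∈ lowerBounds (fixedPoints f)) (hx : f x ≤ x) :
    e ≤ x :=
  (he (OrderHom.map_lfp ⟨f, hf⟩)).trans (OrderHom.lfp_le ⟨f, hf⟩ hx)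

theorem csub_le_csub_right {n n' : ℕ∞} (h : n ≤ n') (m : ℕ∞) : csub n m ≤ csub n' m := by
  unfold csub
  split_ifs with h₁ h₂ h₂
  · exact le_rfl
  · exact absurd ⟨top_le_iff.mp (h₁.1 ▸ h), h₁.2⟩ h₂
  · exact le_top
  · exact tsub_le_tsub_right h m

theorem Accepting.tail {Q : Type*} {Ω : Q → ℕ} {z : ℕ → Q} (hz : Accepting Ω z) :
    Accepting Ω (fun n => z (n + 1)) := by
  intro N
  obtain ⟨n, hn, h⟩ := hz (N + 1)
  exact ⟨n - 1, by omega, by simpa only [Nat.sub_add_cancel (by omega : 1 ≤ n)] using h⟩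

section Extent

variable {Q : Type*} {γ : Q → Q → ℕ∞} {r : Q → ℕ∞}

theorem extStep_mono : Monotone (extStep γ r) :=
  fun _ _ h _ => csub_le_csub_right (iInf_mono fun q' => add_le_add_right (h q') _) _

theorem extStep_le (u : Q → ℕ∞) (q q' : Q) :
    extStep γ r u q ≤ csub (γ q q' + u q') (r q) :=
  csub_le_csub_right (iInf_le _ q') _

theorem extStep_le_val {val : (ℕ → Q) → ℕ∞} (hval : Phi γ r val = val) {u : Q → ℕ∞}
    {z : ℕ → Q} (h : u (z 1) ≤ val (fun n => z (n + 1))) : extStep γ r u (z 0) ≤ val z :=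
  calc extStep γ r u (z 0) ≤ csub (γ (z 0) (z 1) + u (z 1)) (r (z 0)) := extStep_le u _ _
    _ ≤ csub (γ (z 0) (z 1) + val (fun n => z (n + 1))) (r (z 0)) :=
      csub_le_csub_right (by gcongr) _
    _ = val z := congrFun hval z

variable {Ω : Q → ℕ} (hΩ : ∀ q, Ω q = 1 ∨ Ω q = 2)

theorem copair_of_eq_two {u₁ : {q // Ω q = 1} → ℕ∞} {u₂ : {q // Ω q = 2} → ℕ∞} {q : Q}
    (h : Ω q = 2) : copair Ω hΩ u₁ u₂ q = u₂ ⟨q, h⟩ :=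
  dif_pos h

theorem copair_of_ne_two {u₁ : {q // Ω q = 1} → ℕ∞} {u₂ : {q // Ω q = 2} → ℕ∞} {q : Q}
    (h : Ω q ≠ 2) : copair Ω hΩ u₁ u₂ q = u₁ ⟨q, (hΩ q).resolve_right h⟩ :=
  dif_neg h

theorem copair_mono {u₁ u₁' : {q // Ω q = 1} → ℕ∞} {u₂ u₂' : {q // Ω q = 2} → ℕ∞}
    (h₁ : u₁ ≤ u₁') (h₂ : u₂ ≤ u₂') : copair Ω hΩ u₁ u₂ ≤ copair Ω hΩ u₁' u₂' := by
  intro q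
  by_cases hq : Ω q = 2
  · simpa only [copair_of_eq_two hΩ hq] using h₂ _
  · simpa only [copair_of_ne_two hΩ hq] using h₁ _

theorem extStep_copair_mono {u₁ u₁' : {q // Ω q = 1} → ℕ∞} {u₂ u₂' : {q // Ω q = 2} → ℕ∞}
    (h₁ : u₁ ≤ u₁') (h₂ : u₂ ≤ u₂') (q : Q) :
    extStep γ r (copair Ω hΩ u₁ u₂) q ≤ extStep γ r (copair Ω hΩ u₁' u₂') q :=
  extStep_mono (copair_mono hΩ h₁ h₂) q

noncomputable def infAcceptingVal (Ω : Q → ℕ) (val : (ℕ → Q) → ℕ∞) (q : Q) : ℕ∞ :=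
  ⨅ (z : ℕ → Q) (_ : z 0 = q) (_ : Accepting Ω z), val z

theorem infAcceptingVal_le {val : (ℕ → Q) → ℕ∞} {q : Q} {z : ℕ → Q} (hz₀ : z 0 = q)
    (hz : Accepting Ω z) : infAcceptingVal Ω val q ≤ val z :=
  iInf₂_le_of_le z hz₀ (iInf_le _ hz)

variable {val : (ℕ → Q) → ℕ∞} (hval : Phi γ r val = val)
  {inner : ({q // Ω q = 2} → ℕ∞) → ({q // Ω q = 1} → ℕ∞)}
  (hinner : ∀ u₂, (fun q : {q // Ω q = 1} =>
    extStep γ r (copair Ω hΩ (inner u₂) u₂) q.1) = inner u₂)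
include hval hinner

theorem copair_inner_le_val {u₂ : {q // Ω q = 2} → ℕ∞}
    (hu : ∀ (q : {q // Ω q = 2}) (z : ℕ → Q), z 0 = q.1 → Accepting Ω z → u₂ q ≤ val z)
    {z : ℕ → Q} (hz : Accepting Ω z) : copair Ω hΩ (inner u₂) u₂ (z 0) ≤ val z := by
  obtain ⟨n, -, hn⟩ := hz 0
  induction n generalizing z with
  | zero => rw [copair_of_eq_two hΩ hn]; exact hu _ z rfl hz
  | succ n ih =>
    by_cases h₀ : Ω (z 0) = 2
    · rw [copair_of_eq_two hΩ h₀]; exact hu _ z rfl hz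
    · rw [copair_of_ne_two hΩ h₀, ← congrFun (hinner u₂)]
      exact extStep_le_val hval (ih hz.tail hn)

theorem extStep_copair_inner_infAcceptingVal_le (q : {q // Ω q = 2}) :
    extStep γ r (copair Ω hΩ (inner fun q => infAcceptingVal Ω val q.1)
      fun q => infAcceptingVal Ω val q.1) q.1 ≤ infAcceptingVal Ω val q.1 := by
  refine le_iInf₂ fun z hz₀ => le_iInf fun hz => ?_
  rw [← hz₀]
  exact extStep_le_val hval (copair_inner_le_val hΩ hval hinner
    (fun _ _ hz₀ hz => infAcceptingVal_le hz₀ hz) hz.tail)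

end Extent

theorem stmt9_general {Q : Type*}
    (γ : Q → Q → ℕ∞) (r : Q → ℕ∞) (Ω : Q → ℕ) (hΩ : ∀ q, Ω q = 1 ∨ Ω q = 2)
    -- `val` is the `≤`-least fixpoint (pointwise order) of `Φ`
    (val : (ℕ → Q) → ℕ∞)
    (hval : Phi γ r val = val)
    -- `inner u₂` is the `≤`-greatest fixpoint of `u₁ ↦ extStep [u₁, u₂]` on `Q₁`
    (inner : ({q // Ω q = 2} → ℕ∞) → ({q // Ω q = 1} → ℕ∞))
    (hinner : ∀ u₂, (fun q : {q // Ω q = 1} =>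
      extStep γ r (copair Ω hΩ (inner u₂) u₂) q.1) = inner u₂)
    (hinnerGreatest : ∀ u₂ u₁, (fun q : {q // Ω q = 1} =>
      extStep γ r (copair Ω hΩ u₁ u₂) q.1) = u₁ → u₁ ≤ inner u₂)
    -- `e₂` is the `≤`-least fixpoint of `u₂ ↦ extStep [inner u₂, u₂]` on `Q₂`
    (e₂ : {q // Ω q = 2} → ℕ∞)
    (he₂Least : ∀ u₂, (fun q : {q // Ω q = 2} =>
      extStep γ r (copair Ω hΩ (inner u₂) u₂) q.1) = u₂ → e₂ ≤ u₂)
    -- the extent is the copairing `[inner e₂, e₂]`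
    (ext : Q → ℕ∞) (hext : ext = copair Ω hΩ (inner e₂) e₂)
    -- an accepting run `z₀` from `q₀`
    (q₀ : Q) (z₀ : ℕ → Q) (hrun : IsRun γ q₀ z₀) (hacc : Accepting Ω z₀) :
    ext q₀ ≤ val z₀ := by
  have hinnerMono : Monotone inner :=
    monotone_of_isGreatest_fixedPoints
      (G := fun u₂ u₁ (q : {q // Ω q = 1}) => extStep γ r (copair Ω hΩ u₁ u₂) q.1)
      (fun _ _ h₂ _ (q : {q // Ω q = 1}) => extStep_copair_mono hΩ le_rfl h₂ q.1 :)
      (fun _ _ _ h₁ (q : {q // Ω q = 1}) => extStep_copair_mono hΩ h₁ le_rfl q.1 :)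
      (fun u₂ => ⟨hinner u₂, fun u₁ h => hinnerGreatest u₂ u₁ h⟩)
  have he₂_le : e₂ ≤ fun q => infAcceptingVal Ω val q.1 :=
    le_of_mem_lowerBounds_fixedPoints
      (f := fun u₂ (q : {q // Ω q = 2}) => extStep γ r (copair Ω hΩ (inner u₂) u₂) q.1)
      (fun _ _ h₂ (q : {q // Ω q = 2}) => extStep_copair_mono hΩ (hinnerMono h₂) h₂ q.1 :)
      (fun u₂ h => he₂Least u₂ h)
      (extStep_copair_inner_infAcceptingVal_le hΩ hval hinner)
  rw [hext, ← hrun.1]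
  exact copair_inner_le_val hΩ hval hinner
    (fun q _ hz₀ hz => (he₂_le q).trans (infAcceptingVal_le hz₀ hz)) hacc

/-- if `z₀` is an accepting run from `q₀` of a resource-aware Büchi word
automaton, then `ext q₀ ≤ val z₀`: the extent of the initial state is a lower bound on
the minimal initial resources required by any accepting run from that state. -/
theorem stmt9 {Q : Type*} [Fintype Q]
    (γ : Q → Q → ℕ∞) (r : Q → ℕ∞) (Ω : Q → ℕ) (hΩ : ∀ q, Ω q = 1 ∨ Ω q = 2)
    -- `val` is the `≤`-least fixpoint (pointwise order) of `Φ`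
    (val : (ℕ → Q) → ℕ∞)
    (hval : Phi γ r val = val)
    (hvalLeast : ∀ w, Phi γ r w = w → val ≤ w)
    -- `inner u₂` is the `≤`-greatest fixpoint of `u₁ ↦ extStep [u₁, u₂]` on `Q₁`
    (inner : ({q // Ω q = 2} → ℕ∞) → ({q // Ω q = 1} → ℕ∞))
    (hinner : ∀ u₂, (fun q : {q // Ω q = 1} =>
      extStep γ r (copair Ω hΩ (inner u₂) u₂) q.1) = inner u₂)
    (hinnerGreatest : ∀ u₂ u₁, (fun q : {q // Ω q = 1} =>
      extStep γ r (copair Ω hΩ u₁ u₂) q.1) = u₁ → u₁ ≤ inner u₂)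
    -- `e₂` is the `≤`-least fixpoint of `u₂ ↦ extStep [inner u₂, u₂]` on `Q₂`
    (e₂ : {q // Ω q = 2} → ℕ∞)
    (he₂ : (fun q : {q // Ω q = 2} =>
      extStep γ r (copair Ω hΩ (inner e₂) e₂) q.1) = e₂)
    (he₂Least : ∀ u₂, (fun q : {q // Ω q = 2} =>
      extStep γ r (copair Ω hΩ (inner u₂) u₂) q.1) = u₂ → e₂ ≤ u₂)
    -- the extent is the copairing `[inner e₂, e₂]`
    (ext : Q → ℕ∞) (hext : ext = copair Ω hΩ (inner e₂) e₂)
    -- an accepting run `z₀` from `q₀`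
    (q₀ : Q) (z₀ : ℕ → Q) (hrun : IsRun γ q₀ z₀) (hacc : Accepting Ω z₀) :
    ext q₀ ≤ val z₀ :=
  stmt9_general γ r Ω hΩ val hval inner hinner hinnerGreatest e₂ he₂Least ext hext q₀ z₀ hrun hacc
end

section
/- Suppose z is a run of a resource-aware Büchi word automaton and ρ : ℕ → ℕ is an annotation such that for every n: ρ n ≥ ext (z n) (in particular ext (z n) ≠ ∞), and ρ n + r (z n) ≥ γ (z n) (z (n+1)) + ρ (n+1) (the incoming annotation plus the offset gained in z n covers the resources consumed by the step plus the outgoing annotation, as an inequality in ℕ∞). Then val z ≤ ρ 0. -/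
/-!
The annotation `ρ` along the suffixes of `z` is a pre-fixpoint of `Φ`: the step inequality
`γ (z n) (z (n+1)) + ρ (n+1) ≤ ρ n + r (z n)` says exactly `Φ w ≤ w`, for this annotation `w`, at the suffix starting at
`n`, the transition weights being finite so that capped subtraction is ordinary truncated
subtraction there. By Park induction the least fixpoint `val` lies below every pre-fixpoint,
so `val z ≤ ρ 0`.
-/

lemma csub_le_csub_left {a a' b : ℕ∞} (h : a ≤ a') : csub a b ≤ csub a' b := by
  unfold csub
  split_ifs with h₁ h₂ h₂
  · exact le_rfl
  · exact absurd ⟨top_le_iff.mp (h₁.1 ▸ h), h₁.2⟩ h₂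
  · exact le_top
  · exact tsub_le_tsub_right h _

lemma csub_le_of_le_add {a b c : ℕ∞} (ha : a ≠ ⊤) (h : a ≤ c + b) : csub a b ≤ c := by
  rw [csub, if_neg fun h' => ha h'.1]
  exact tsub_le_iff_right.mpr h

lemma monotone_Phi {Q : Type*} (γ : Q → Q → ℕ∞) (r : Q → ℕ∞) : Monotone (Phi γ r) :=
  fun _ _ hv _ => csub_le_csub_left (add_le_add_right (hv _) _)

lemma le_of_le_fixedPoints_of_map_le {α : Type*} [CompleteLattice α] {f : α → α}
    (hf : Monotone f) {a : α} (ha : ∀ w, f w = w → a ≤ w) {w : α} (hw : f w ≤ w) : a ≤ w :=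
  let F : α →o α := ⟨f, hf⟩
  (ha _ F.map_lfp).trans (OrderHom.lfp_le F hw)

section SuffixBound

variable {Q : Type*} (z : ℕ → Q) (ρ : ℕ → ℕ)

/-- Assigns `ρ n` to the suffix of `z` starting at `n` (the least such value if the suffix
recurs), and `⊤` to sequences that are not suffixes of `z`. -/
noncomputable def suffixBound (y : ℕ → Q) : ℕ∞ :=
  ⨅ (n : ℕ) (_ : y = fun k => z (n + k)), (ρ n : ℕ∞)

lemma suffixBound_le {y : ℕ → Q} (n : ℕ) (hy : y = fun k => z (n + k)) :
    suffixBound z ρ y ≤ ρ n :=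
  (iInf_le _ n).trans (iInf_le _ hy)

lemma Phi_suffixBound_le {γ : Q → Q → ℕ∞} {r : Q → ℕ∞} {q₀ : Q} (hrun : IsRun γ q₀ z)
    (hstep : ∀ n, γ (z n) (z (n + 1)) + (ρ (n + 1) : ℕ∞) ≤ (ρ n : ℕ∞) + r (z n)) :
    Phi γ r (suffixBound z ρ) ≤ suffixBound z ρ := by
  intro y
  refine le_iInf fun n => le_iInf fun hy => ?_
  subst hy
  have htail : suffixBound z ρ (fun k => z (n + (k + 1))) ≤ ρ (n + 1) :=
    suffixBound_le z ρ (n + 1) (funext fun k => congrArg z (by omega))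
  have hγ : γ (z n) (z (n + 1)) ≠ ⊤ := hrun.2 n
  refine csub_le_of_le_add ?_ ?_
  · exact WithTop.add_ne_top.mpr ⟨hγ, ne_top_of_le_ne_top (WithTop.natCast_ne_top _) htail⟩
  · exact (add_le_add_right htail _).trans (hstep n)

end SuffixBound

theorem stmt10_general {Q : Type*}
    (γ : Q → Q → ℕ∞) (r : Q → ℕ∞)
    -- `val` is the `≤`-least fixpoint (pointwise order) of `Φ`
    (val : (ℕ → Q) → ℕ∞)
    (hvalLeast : ∀ w, Phi γ r w = w → val ≤ w)
    -- a run `z` annotated by `ρ`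
    (z : ℕ → Q) (hrun : IsRun γ (z 0) z)
    (ρ : ℕ → ℕ)
    (hρstep : ∀ n, γ (z n) (z (n + 1)) + (ρ (n + 1) : ℕ∞) ≤ (ρ n : ℕ∞) + r (z n)) :
    val z ≤ (ρ 0 : ℕ∞) := by
  have hval : val ≤ suffixBound z ρ :=
    le_of_le_fixedPoints_of_map_le (monotone_Phi γ r) hvalLeast
      (Phi_suffixBound_le z ρ hrun hρstep)
  exact (hval z).trans (suffixBound_le z ρ 0 (funext fun k => congrArg z (zero_add k).symm))

/-- if `z` is a run and `ρ : ℕ → ℕ` an annotation with `ρ n ≥ ext (z n)`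
(in particular `ext (z n) ≠ ∞`) and `ρ n + r (z n) ≥ γ (z n) (z (n+1)) + ρ (n+1)` for
every `n`, then `val z ≤ ρ 0`. -/
theorem stmt10 {Q : Type*} [Fintype Q]
    (γ : Q → Q → ℕ∞) (r : Q → ℕ∞) (Ω : Q → ℕ) (hΩ : ∀ q, Ω q = 1 ∨ Ω q = 2)
    -- `val` is the `≤`-least fixpoint (pointwise order) of `Φ`
    (val : (ℕ → Q) → ℕ∞)
    (hval : Phi γ r val = val)
    (hvalLeast : ∀ w, Phi γ r w = w → val ≤ w)
    -- `inner u₂` is the `≤`-greatest fixpoint of `u₁ ↦ extStep [u₁, u₂]` on `Q₁`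
    (inner : ({q // Ω q = 2} → ℕ∞) → ({q // Ω q = 1} → ℕ∞))
    (hinner : ∀ u₂, (fun q : {q // Ω q = 1} =>
      extStep γ r (copair Ω hΩ (inner u₂) u₂) q.1) = inner u₂)
    (hinnerGreatest : ∀ u₂ u₁, (fun q : {q // Ω q = 1} =>
      extStep γ r (copair Ω hΩ u₁ u₂) q.1) = u₁ → u₁ ≤ inner u₂)
    -- `e₂` is the `≤`-least fixpoint of `u₂ ↦ extStep [inner u₂, u₂]` on `Q₂`
    (e₂ : {q // Ω q = 2} → ℕ∞)
    (he₂ : (fun q : {q // Ω q = 2} =>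
      extStep γ r (copair Ω hΩ (inner e₂) e₂) q.1) = e₂)
    (he₂Least : ∀ u₂, (fun q : {q // Ω q = 2} =>
      extStep γ r (copair Ω hΩ (inner u₂) u₂) q.1) = u₂ → e₂ ≤ u₂)
    -- the extent is the copairing `[inner e₂, e₂]`
    (ext : Q → ℕ∞) (hext : ext = copair Ω hΩ (inner e₂) e₂)
    -- a run `z` annotated by `ρ`
    (z : ℕ → Q) (hrun : IsRun γ (z 0) z)
    (ρ : ℕ → ℕ)
    (hρext : ∀ n, ext (z n) ≤ (ρ n : ℕ∞))
    (hρstep : ∀ n, γ (z n) (z (n + 1)) + (ρ (n + 1) : ℕ∞) ≤ (ρ n : ℕ∞) + r (z n)) :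
    val z ≤ (ρ 0 : ℕ∞) :=
  stmt10_general γ r val hvalLeast z hrun ρ hρstep
end
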